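/- arXiv:2209.14728 — 2 statements merged into one kernel-verified Lean document; each statement's English description precedes it below -/
import Mathlib

section
/- In a Markov category with all support objects and Bayesian inverses, Bayesian inversion-with-support is functorial: if f : X → Y and g : Y → Z have Bayesian inverses-with-support f^♯_π : Y_{π;f} → X_π and g^♯_{π;f} : Z_{π;f;g} → Y_{π;f}, then g^♯_{π;f} ; f^♯_π is the Bayesian inverse-with-support of f;g at π. Moreover the inverse-with-support of id_X at π is id_{X_π}. -/
open CategoryTheory MonoidalCategory

universe v u

class MarkovCategory (C : Type u) [Category.{v} C] [MonoidalCategory C] [SymmetricCategory C] where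
  copy : ∀ X : C, X ⟶ X ⊗ X
  del : ∀ X : C, X ⟶ 𝟙_ C
  copy_del_left : ∀ X : C, copy X ≫ (del X ▷ X) = (λ_ X).inv
  copy_del_right : ∀ X : C, copy X ≫ (X ◁ del X) = (ρ_ X).inv
  copy_assoc : ∀ X : C, copy X ≫ (copy X ▷ X) ≫ (α_ X X X).hom = copy X ≫ (X ◁ copy X)
  copy_comm : ∀ X : C, copy X ≫ (β_ X X).hom = copy X
  del_natural : ∀ {X Y : C} (f : X ⟶ Y), f ≫ del Y = del X
  copy_tensor : ∀ X Y : C, copy (X ⊗ Y) = (copy X ⊗ₘ copy Y) ≫ tensorμ X X Y Y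
  del_tensor : ∀ X Y : C, del (X ⊗ Y) = (del X ⊗ₘ del Y) ≫ (λ_ (𝟙_ C)).hom
  copy_unit : copy (𝟙_ C) = (λ_ (𝟙_ C)).inv
  del_unit : del (𝟙_ C) = 𝟙 (𝟙_ C)

namespace MarkovCategory

variable {C : Type u} [Category.{v} C] [MonoidalCategory C] [SymmetricCategory C] [_root_.MarkovCategory C]

/-- `f` is `π`-almost-surely equal to `g`. -/
def AsEq {X Y : C} (π : 𝟙_ C ⟶ X) (f g : X ⟶ Y) : Prop :=
  π ≫ copy X ≫ (X ◁ f) = π ≫ copy X ≫ (X ◁ g)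

/-- `h` is a Bayesian inverse of `f` at the prior `π`. -/
def BayesInv {X Y : C} (π : 𝟙_ C ⟶ X) (f : X ⟶ Y) (h : Y ⟶ X) : Prop :=
  π ≫ copy X ≫ (X ◁ f) = π ≫ f ≫ copy Y ≫ (h ▷ Y)

/-- Left marginal of a state on a tensor product. -/
def margL {X Y : C} (π : 𝟙_ C ⟶ X ⊗ Y) : 𝟙_ C ⟶ X :=
  π ≫ (X ◁ del Y) ≫ (ρ_ X).hom

/-- Right marginal of a state on a tensor product. -/
def margR {X Y : C} (π : 𝟙_ C ⟶ X ⊗ Y) : 𝟙_ C ⟶ Y :=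
  π ≫ (del X ▷ Y) ≫ (λ_ Y).hom

end MarkovCategory

namespace MarkovCategory

variable (C : Type u) [Category.{v} C] [MonoidalCategory C] [SymmetricCategory C] [_root_.MarkovCategory C]

/-- A choice, for every state `π : I ⟶ X`, of a support object with a
section–retraction pair characterising `π`-almost-sure equality. -/
structure SupportChoice where
  sobj : ∀ {X : C}, (𝟙_ C ⟶ X) → C
  sec : ∀ {X : C} (π : 𝟙_ C ⟶ X), sobj π ⟶ X
  ret : ∀ {X : C} (π : 𝟙_ C ⟶ X), X ⟶ sobj π
  sec_ret : ∀ {X : C} (π : 𝟙_ C ⟶ X), sec π ≫ ret π = 𝟙 (sobj π)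
  asEq_iff : ∀ {X Y : C} (π : 𝟙_ C ⟶ X) (f g : X ⟶ Y),
    AsEq π f g ↔ sec π ≫ f = sec π ≫ g

variable {C}

/-- The restriction of `f : X ⟶ Y` to a morphism between supports `X_π ⟶ Y_{π ≫ f}`. -/
def SupportChoice.restr (S : SupportChoice C) {X Y : C} (π : 𝟙_ C ⟶ X) (f : X ⟶ Y) :
    S.sobj π ⟶ S.sobj (π ≫ f) :=
  S.sec π ≫ f ≫ S.ret (π ≫ f)

end MarkovCategory

/-! Inverses-with-support are conjugated ordinary Bayesian inverses `ret ≫ h ≫ sec`. Ordinary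
Bayesian inverses compose contravariantly, and in the conjugated composite the middle `sec ≫ ret`
cancels. For the identity, `ret ≫ sec` agrees with `𝟙` almost surely (by the defining property of
the support), and the Bayes law for `𝟙` says precisely that its inverse is a.s. the identity. -/

namespace MarkovCategory

variable {C : Type u} [Category.{v} C] [MonoidalCategory C] [SymmetricCategory C] [_root_.MarkovCategory C]

theorem BayesInv.comp {X Y Z : C} {π : 𝟙_ C ⟶ X} {f : X ⟶ Y} {g : Y ⟶ Z} {F : Y ⟶ X}
    {G : Z ⟶ Y} (hf : BayesInv π f F) (hg : BayesInv (π ≫ f) g G) :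
    BayesInv π (f ≫ g) (G ≫ F) := by
  unfold BayesInv at hf hg ⊢
  calc π ≫ copy X ≫ (X ◁ (f ≫ g))
      = (π ≫ copy X ≫ (X ◁ f)) ≫ (X ◁ g) := by simp
    _ = (π ≫ f ≫ copy Y ≫ (F ▷ Y)) ≫ (X ◁ g) := by rw [hf]
    _ = ((π ≫ f) ≫ copy Y ≫ (Y ◁ g)) ≫ (F ▷ Z) := by simp [whisker_exchange]
    _ = ((π ≫ f) ≫ g ≫ copy Z ≫ (G ▷ Z)) ≫ (F ▷ Z) := by rw [hg]
    _ = π ≫ (f ≫ g) ≫ copy Z ≫ ((G ≫ F) ▷ Z) := by simp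

theorem copy_whiskerRight_eq {X Y : C} (h : X ⟶ Y) :
    copy X ≫ (h ▷ X) = copy X ≫ (X ◁ h) ≫ (β_ X Y).hom := by
  rw [BraidedCategory.braiding_naturality_right, ← Category.assoc, copy_comm]

theorem AsEq.copy_whiskerRight {X Y : C} {π : 𝟙_ C ⟶ X} {h k : X ⟶ Y} (hhk : AsEq π h k) :
    π ≫ copy X ≫ (h ▷ X) = π ≫ copy X ≫ (k ▷ X) := by
  unfold AsEq at hhk
  simp only [copy_whiskerRight_eq, ← Category.assoc] at hhk ⊢
  rw [hhk]

theorem bayesInv_id_of_asEq {X : C} {π : 𝟙_ C ⟶ X} {h : X ⟶ X} (hh : AsEq π h (𝟙 X)) :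
    BayesInv π (𝟙 X) h := by
  simpa [BayesInv] using hh.copy_whiskerRight.symm

namespace SupportChoice

variable (S : SupportChoice C)

theorem asEq_ret_sec {X : C} (π : 𝟙_ C ⟶ X) : AsEq π (S.ret π ≫ S.sec π) (𝟙 X) := by
  rw [S.asEq_iff]
  simp [reassoc_of% S.sec_ret π]

end SupportChoice

/-- Bayesian inversion-with-support is functorial: the
inverse-with-support of a composite is the composite (in reverse order) of the
inverses-with-support, and the inverse-with-support of `𝟙 X` at `π` is `𝟙 X_π`. -/
theorem bayesInv_with_support_functorial (S : SupportChoice C) :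
    (∀ (X Y Z : C) (π : 𝟙_ C ⟶ X) (f : X ⟶ Y) (g : Y ⟶ Z)
      (f' : S.sobj (π ≫ f) ⟶ S.sobj π) (g' : S.sobj (π ≫ f ≫ g) ⟶ S.sobj (π ≫ f)),
      BayesInv π f (S.ret (π ≫ f) ≫ f' ≫ S.sec π) →
      BayesInv (π ≫ f) g (S.ret (π ≫ f ≫ g) ≫ g' ≫ S.sec (π ≫ f)) →
      BayesInv π (f ≫ g) (S.ret (π ≫ f ≫ g) ≫ (g' ≫ f') ≫ S.sec π)) ∧
    (∀ (X : C) (π : 𝟙_ C ⟶ X),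
      BayesInv π (𝟙 X) (S.ret π ≫ 𝟙 (S.sobj π) ≫ S.sec π)) := by
  constructor
  · intro X Y Z π f g f' g' hf hg
    have hcomp := hf.comp (by simpa only [Category.assoc] using hg)
    simpa [reassoc_of% S.sec_ret (π ≫ f)] using hcomp
  · intro X π
    rw [Category.id_comp]
    exact bayesInv_id_of_asEq (S.asEq_ret_sec π)

end MarkovCategory
end

section
/- In a Markov category with support objects and Bayesian inverses, the defining-property intermediate identities for the copy-support isomorphism hold: L^♯_{π;C} ; i_{π;C} = i_π ; C and C^♯_π ; i_π = i_{π;C} ; L, where C = copy_X, L is left marginalisation, π : I → X, and i denotes support sections. -/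
open CategoryTheory MonoidalCategory

universe v u

namespace MarkovCategory

variable {C : Type u} [Category.{v} C] [MonoidalCategory C] [SymmetricCategory C] [_root_.MarkovCategory C]

section Braided

variable {C : Type u} [Category.{v} C] [MonoidalCategory C] [BraidedCategory C]

lemma tensorμ_whiskerLeft_whiskerLeft (X Y : C) (d : Y ⟶ 𝟙_ C) :
    tensorμ X X Y Y ≫ ((X ⊗ Y) ◁ (X ◁ d)) = ((X ⊗ X) ◁ (Y ◁ d)) ≫ tensorμ X X Y (𝟙_ C) := by
  simpa using (tensorμ_natural (𝟙 X) (𝟙 X) (𝟙 Y) d).symm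

lemma tensorμ_whiskerRight_whiskerLeft (X Y : C) (d : Y ⟶ 𝟙_ C) :
    tensorμ X X Y Y ≫ ((X ◁ d) ▷ (X ⊗ Y)) = ((X ⊗ X) ◁ (d ▷ Y)) ≫ tensorμ X X (𝟙_ C) Y := by
  simpa using (tensorμ_natural (𝟙 X) (𝟙 X) d (𝟙 Y)).symm

lemma whiskerLeft_rightUnitor_inv_tensorμ (X Y : C) :
    ((X ⊗ X) ◁ (ρ_ Y).inv) ≫ tensorμ X X Y (𝟙_ C) ≫ ((X ⊗ Y) ◁ (ρ_ X).hom) =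
      (α_ X X Y).hom ≫ (X ◁ (β_ X Y).hom) ≫ (α_ X Y X).inv := by
  simp [tensorμ]

lemma whiskerLeft_leftUnitor_inv_tensorμ (X Y : C) :
    ((X ⊗ X) ◁ (λ_ Y).inv) ≫ tensorμ X X (𝟙_ C) Y ≫ ((ρ_ X).hom ▷ (X ⊗ Y)) = (α_ X X Y).hom := by
  rw [tensorμ, braiding_tensorUnit_right]
  monoidal

end Braided

end MarkovCategory

namespace MarkovCategory

variable {C : Type u} [Category.{v} C] [MonoidalCategory C] [SymmetricCategory C] [_root_.MarkovCategory C]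

/-- The left marginalisation map `X ⊗ X ⟶ X`. -/
def lmarg (X : C) : X ⊗ X ⟶ X := (X ◁ del X) ≫ (ρ_ X).hom

lemma copy_tensor_whiskerLeft_fst (X Y : C) :
    copy (X ⊗ Y) ≫ ((X ⊗ Y) ◁ ((X ◁ del Y) ≫ (ρ_ X).hom)) =
      (copy X ▷ Y) ≫ (α_ X X Y).hom ≫ (X ◁ (β_ X Y).hom) ≫ (α_ X Y X).inv := by
  rw [copy_tensor, MonoidalCategory.whiskerLeft_comp]
  slice_lhs 2 3 => rw [tensorμ_whiskerLeft_whiskerLeft]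
  slice_lhs 1 2 => rw [← id_tensorHom, tensorHom_comp_tensorHom, Category.comp_id, copy_del_right]
  rw [MonoidalCategory.tensorHom_def]
  simp only [Category.assoc]
  rw [whiskerLeft_rightUnitor_inv_tensorμ]

lemma copy_tensor_fst_whiskerRight (X Y : C) :
    copy (X ⊗ Y) ≫ (((X ◁ del Y) ≫ (ρ_ X).hom) ▷ (X ⊗ Y)) = (copy X ▷ Y) ≫ (α_ X X Y).hom := by
  rw [copy_tensor, comp_whiskerRight]
  slice_lhs 2 3 => rw [tensorμ_whiskerRight_whiskerLeft]
  slice_lhs 1 2 => rw [← id_tensorHom, tensorHom_comp_tensorHom, Category.comp_id, copy_del_left]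
  rw [MonoidalCategory.tensorHom_def]
  simp only [Category.assoc]
  rw [whiskerLeft_leftUnitor_inv_tensorμ]

lemma copy_lmarg (X : C) : copy X ≫ lmarg X = 𝟙 X := by
  rw [lmarg, ← Category.assoc, copy_del_right, Iso.inv_hom_id]

lemma copy_copy_tensor_whiskerLeft_lmarg (X : C) :
    copy X ≫ copy (X ⊗ X) ≫ ((X ⊗ X) ◁ lmarg X) = copy X ≫ (copy X ▷ X) := by
  rw [lmarg, copy_tensor_whiskerLeft_fst, reassoc_of% copy_assoc, ← MonoidalCategory.whiskerLeft_comp_assoc, copy_comm,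
    ← reassoc_of% copy_assoc, Iso.hom_inv_id, Category.comp_id]

lemma copy_copy_tensor_lmarg_whiskerRight (X : C) :
    copy X ≫ copy (X ⊗ X) ≫ (lmarg X ▷ (X ⊗ X)) = copy X ≫ (X ◁ copy X) := by
  rw [lmarg, copy_tensor_fst_whiskerRight, copy_assoc]

lemma asEq_iff_whiskerRight {X W : C} (π : 𝟙_ C ⟶ X) (u v : X ⟶ W) :
    AsEq π u v ↔ π ≫ copy X ≫ (u ▷ X) = π ≫ copy X ≫ (v ▷ X) := by
  have swap : ∀ f : X ⟶ W, π ≫ copy X ≫ (f ▷ X) = (π ≫ copy X ≫ (X ◁ f)) ≫ (β_ X W).hom := by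
    intro f
    simp only [Category.assoc, BraidedCategory.braiding_naturality_right]
    rw [reassoc_of% copy_comm]
  rw [swap u, swap v, cancel_mono]
  rfl

lemma asEq_copy_of_bayesInv_lmarg {X : C} (π : 𝟙_ C ⟶ X) {h : X ⟶ X ⊗ X}
    (hL : BayesInv (π ≫ copy X) (lmarg X) h) : AsEq π h (copy X) := by
  rw [asEq_iff_whiskerRight]
  unfold BayesInv at hL
  simp only [Category.assoc, copy_copy_tensor_whiskerLeft_lmarg, reassoc_of% copy_lmarg] at hL
  exact hL.symm

lemma asEq_lmarg_of_bayesInv_copy {X : C} (π : 𝟙_ C ⟶ X) {h : X ⊗ X ⟶ X}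
    (hC : BayesInv π (copy X) h) : AsEq (π ≫ copy X) h (lmarg X) := by
  rw [asEq_iff_whiskerRight]
  unfold BayesInv at hC
  simp only [Category.assoc, copy_copy_tensor_lmarg_whiskerRight]
  exact hC.symm

lemma eq_section_comp_of_asEq {X S Y : C} {π : 𝟙_ C ⟶ X} {i : S ⟶ X} {r : X ⟶ S}
    (hir : i ≫ r = 𝟙 S) (hsupp : ∀ {W : C} (u v : X ⟶ W), AsEq π u v → i ≫ u = i ≫ v)
    {f : S ⟶ Y} {g : X ⟶ Y} (h : AsEq π (r ≫ f) g) : f = i ≫ g := by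
  simpa [reassoc_of% hir] using hsupp _ _ h

/-- The intermediate identities for the copy-support isomorphism:
`Lsharp ≫ i_{π≫C} = i_π ≫ copy X` and `Csharp ≫ i_π = i_{π≫C} ≫ L`. -/
theorem copy_support_intermediate {X Xπ XXc : C} (π : 𝟙_ C ⟶ X)
    (iπ : Xπ ⟶ X) (rπ : X ⟶ Xπ) (hirπ : iπ ≫ rπ = 𝟙 Xπ)
    (hsuppπ : ∀ (W : C) (u v : X ⟶ W), AsEq π u v ↔ iπ ≫ u = iπ ≫ v)
    (iC : XXc ⟶ X ⊗ X) (rC : X ⊗ X ⟶ XXc) (hirC : iC ≫ rC = 𝟙 XXc)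
    (hsuppC : ∀ (W : C) (u v : X ⊗ X ⟶ W),
      AsEq (π ≫ copy X) u v ↔ iC ≫ u = iC ≫ v)
    (Csharp : XXc ⟶ Xπ) (hC : BayesInv π (copy X) (rC ≫ Csharp ≫ iπ))
    (Lsharp : Xπ ⟶ XXc) (hL : BayesInv (π ≫ copy X) (lmarg X) (rπ ≫ Lsharp ≫ iC)) :
    Lsharp ≫ iC = iπ ≫ copy X ∧ Csharp ≫ iπ = iC ≫ lmarg X :=
  ⟨eq_section_comp_of_asEq hirπ (fun u v => (hsuppπ _ u v).mp) (asEq_copy_of_bayesInv_lmarg π hL),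
    eq_section_comp_of_asEq hirC (fun u v => (hsuppC _ u v).mp) (asEq_lmarg_of_bayesInv_copy π hC)⟩

end MarkovCategory
end
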